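/- Let (A, μ, Δ, α, R) be a cobraided Hom-bialgebra over a commutative ring k with α-invariant R, and let (U, α_U), (V, α_V), (W, α_W) be A-comodules with structure maps written ρ(m) = Σ m_A ⊗ m_M. For u ∈ U, v ∈ V, w ∈ W, let θ = Σ R((v_A)₁ ⊗ (u_A)₁) R((w_A)₁ ⊗ (u_A)₂) R((w_A)₂ ⊗ (v_A)₂) α²(w_W) ⊗ α²(v_V) ⊗ α²(u_U) ∈ W ⊗ V ⊗ U, where the subscripts 1 and 2 denote the Sweedler components of Δ applied to u_A, v_A, w_A, and α² denotes the square of the relevant twisting map. Then (B_{V,W} ⊗ α_U) ∘ (α_V ⊗ B_{U,W}) ∘ (B_{U,V} ⊗ α_W) applied to u ⊗ v ⊗ w equals θ, where B_{X,Y}(x ⊗ y) = Σ R(y_A ⊗ x_A) y_Y ⊗ x_X. -/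

import Mathlib

open TensorProduct

/-- The axioms of a Hom-bialgebra (no unit or counit assumed):
multiplicativity and comultiplicativity of the twisting map `α`,
Hom-associativity, Hom-coassociativity, and the compatibility
`Δ(xy) = Σ x₁y₁ ⊗ x₂y₂` (stated via arbitrary finite representations of the
Sweedler sums). -/
def IsHomBialgebra (k : Type*) {A : Type*} [CommRing k] [AddCommGroup A] [Module k A]
    (μ : A →ₗ[k] A →ₗ[k] A) (Δ : A →ₗ[k] A ⊗[k] A) (α : A →ₗ[k] A) : Prop :=
  (∀ x y : A, α (μ x y) = μ (α x) (α y)) ∧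
  (∀ x y z : A, μ (α x) (μ y z) = μ (μ x y) (α z)) ∧
  (TensorProduct.map α α ∘ₗ Δ = Δ ∘ₗ α) ∧
  (TensorProduct.map α Δ ∘ₗ Δ =
    (TensorProduct.assoc k A A A).toLinearMap ∘ₗ TensorProduct.map Δ α ∘ₗ Δ) ∧
  (∀ (x y : A) (m n : ℕ) (x1 x2 : Fin m → A) (y1 y2 : Fin n → A),
    Δ x = ∑ i, x1 i ⊗ₜ[k] x2 i → Δ y = ∑ j, y1 j ⊗ₜ[k] y2 j →
    Δ (μ x y) = ∑ i, ∑ j, μ (x1 i) (y1 j) ⊗ₜ[k] μ (x2 i) (y2 j))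

/-- A cobraided Hom-bialgebra: a Hom-bialgebra together with a bilinear form `R`
satisfying the three axioms (i), (ii), (iii), stated via arbitrary finite
representations of the Sweedler sums. -/
def IsCobraidedHomBialgebra (k : Type*) {A : Type*} [CommRing k] [AddCommGroup A] [Module k A]
    (μ : A →ₗ[k] A →ₗ[k] A) (Δ : A →ₗ[k] A ⊗[k] A) (α : A →ₗ[k] A)
    (R : A →ₗ[k] A →ₗ[k] k) : Prop :=
  IsHomBialgebra k μ Δ α ∧
  (∀ (x y z : A) (n : ℕ) (z1 z2 : Fin n → A), Δ z = ∑ i, z1 i ⊗ₜ[k] z2 i →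
    R (μ x y) (α z) = ∑ i, R (α x) (z1 i) * R (α y) (z2 i)) ∧
  (∀ (x y z : A) (n : ℕ) (x1 x2 : Fin n → A), Δ x = ∑ i, x1 i ⊗ₜ[k] x2 i →
    R (α x) (μ y z) = ∑ i, R (x1 i) (α z) * R (x2 i) (α y)) ∧
  (∀ (x y : A) (m n : ℕ) (x1 x2 : Fin m → A) (y1 y2 : Fin n → A),
    Δ x = ∑ i, x1 i ⊗ₜ[k] x2 i → Δ y = ∑ j, y1 j ⊗ₜ[k] y2 j →
    ∑ i, ∑ j, R (x2 i) (y2 j) • μ (y1 j) (x1 i)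
      = ∑ i, ∑ j, R (x1 i) (y1 j) • μ (x2 i) (y2 j))

/-- A (classical) cobraided bialgebra, without unit, counit, or invertibility of `R`. -/
def IsCobraidedBialgebra (k : Type*) {A : Type*} [CommRing k] [AddCommGroup A] [Module k A]
    (μ : A →ₗ[k] A →ₗ[k] A) (Δ : A →ₗ[k] A ⊗[k] A) (R : A →ₗ[k] A →ₗ[k] k) : Prop :=
  (∀ x y z : A, μ (μ x y) z = μ x (μ y z)) ∧
  (TensorProduct.map LinearMap.id Δ ∘ₗ Δ =
    (TensorProduct.assoc k A A A).toLinearMap ∘ₗ TensorProduct.map Δ LinearMap.id ∘ₗ Δ) ∧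
  (∀ (x y : A) (m n : ℕ) (x1 x2 : Fin m → A) (y1 y2 : Fin n → A),
    Δ x = ∑ i, x1 i ⊗ₜ[k] x2 i → Δ y = ∑ j, y1 j ⊗ₜ[k] y2 j →
    Δ (μ x y) = ∑ i, ∑ j, μ (x1 i) (y1 j) ⊗ₜ[k] μ (x2 i) (y2 j)) ∧
  (∀ (x y z : A) (n : ℕ) (z1 z2 : Fin n → A), Δ z = ∑ i, z1 i ⊗ₜ[k] z2 i →
    R (μ x y) z = ∑ i, R x (z1 i) * R y (z2 i)) ∧
  (∀ (x y z : A) (n : ℕ) (x1 x2 : Fin n → A), Δ x = ∑ i, x1 i ⊗ₜ[k] x2 i →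
    R x (μ y z) = ∑ i, R (x1 i) z * R (x2 i) y) ∧
  (∀ (x y : A) (m n : ℕ) (x1 x2 : Fin m → A) (y1 y2 : Fin n → A),
    Δ x = ∑ i, x1 i ⊗ₜ[k] x2 i → Δ y = ∑ j, y1 j ⊗ₜ[k] y2 j →
    ∑ i, ∑ j, R (x2 i) (y2 j) • μ (y1 j) (x1 i)
      = ∑ i, ∑ j, R (x1 i) (y1 j) • μ (x2 i) (y2 j))

/-- A braided (quasi-triangular) Hom-bialgebra, with `R ∈ A ⊗ A`. -/
def IsBraidedHomBialgebra (k : Type*) {A : Type*} [CommRing k] [AddCommGroup A] [Module k A]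
    (μ : A →ₗ[k] A →ₗ[k] A) (Δ : A →ₗ[k] A ⊗[k] A) (α : A →ₗ[k] A)
    (Rel : A ⊗[k] A) : Prop :=
  IsHomBialgebra k μ Δ α ∧
  (∀ (n : ℕ) (s t : Fin n → A), Rel = ∑ i, s i ⊗ₜ[k] t i →
    TensorProduct.map Δ α Rel = ∑ i, ∑ j, (α (s i) ⊗ₜ[k] α (s j)) ⊗ₜ[k] μ (t i) (t j)) ∧
  (∀ (n : ℕ) (s t : Fin n → A), Rel = ∑ i, s i ⊗ₜ[k] t i →
    TensorProduct.map α Δ Rel = ∑ i, ∑ j, μ (s i) (s j) ⊗ₜ[k] (α (t j) ⊗ₜ[k] α (t i))) ∧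
  (∀ (x : A) (m n : ℕ) (x1 x2 : Fin m → A) (s t : Fin n → A),
    Δ x = ∑ i, x1 i ⊗ₜ[k] x2 i → Rel = ∑ i, s i ⊗ₜ[k] t i →
    ∑ i, ∑ j, μ (x2 i) (s j) ⊗ₜ[k] μ (x1 i) (t j)
      = ∑ i, ∑ j, μ (s j) (x1 i) ⊗ₜ[k] μ (t j) (x2 i))

/-- The convolution-type product on the dual induced by a comultiplication:
`⟨Δ*(φ ⊗ ψ), x⟩ = Σ φ(x₁) ψ(x₂)`. -/
noncomputable def deltaStar (k : Type*) {A : Type*} [CommRing k] [AddCommGroup A] [Module k A]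
    (Δ : A →ₗ[k] A ⊗[k] A) (φ ψ : Module.Dual k A) : Module.Dual k A :=
  TensorProduct.lift ((LinearMap.mul k k).compl₁₂ φ ψ) ∘ₗ Δ

/-- The bilinear version of `deltaStar`, `Δ* : A* →ₗ A* →ₗ A*`. -/
noncomputable def deltaStarBil (k : Type*) {A : Type*} [CommRing k] [AddCommGroup A] [Module k A]
    (Δ : A →ₗ[k] A ⊗[k] A) :
    Module.Dual k A →ₗ[k] Module.Dual k A →ₗ[k] Module.Dual k A :=
  TensorProduct.curry (Δ.dualMap ∘ₗ TensorProduct.dualDistrib k A A)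

/-- The dual comultiplication `μ* : A* → A* ⊗ A*` of a multiplication `μ` on a
finite free module, determined by `⟨μ*(φ), x ⊗ y⟩ = φ(xy)`. -/
noncomputable def mulStar (k : Type*) {A : Type*} [CommRing k] [AddCommGroup A] [Module k A]
    [Module.Finite k A] [Module.Free k A] (μ : A →ₗ[k] A →ₗ[k] A) :
    Module.Dual k A →ₗ[k] Module.Dual k A ⊗[k] Module.Dual k A :=
  (TensorProduct.dualDistribEquiv k A A).symm.toLinearMap ∘ₗ (TensorProduct.lift μ).dualMap

/-- The bilinear form `R̂` on the dual induced by an element `Rel = Σ sᵢ ⊗ tᵢ ∈ A ⊗ A`: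
`R̂(φ ⊗ ψ) = Σ φ(sᵢ) ψ(tᵢ)`. -/
noncomputable def rhat (k : Type*) {A : Type*} [CommRing k] [AddCommGroup A] [Module k A]
    (Rel : A ⊗[k] A) : Module.Dual k A →ₗ[k] Module.Dual k A →ₗ[k] k :=
  TensorProduct.curry (LinearMap.applyₗ (R := k) Rel ∘ₗ TensorProduct.dualDistrib k A A)

/-- A comodule `(M, α_M, ρ)` over a Hom-coassociative coalgebra `(A, Δ, α)`:
Hom-coassociativity and comultiplicativity of the structure map. -/
def IsComodule (k : Type*) {A M : Type*} [CommRing k] [AddCommGroup A] [Module k A]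
    [AddCommGroup M] [Module k M] (Δ : A →ₗ[k] A ⊗[k] A) (α : A →ₗ[k] A)
    (αM : M →ₗ[k] M) (ρ : M →ₗ[k] A ⊗[k] M) : Prop :=
  ((TensorProduct.assoc k A A M).toLinearMap ∘ₗ TensorProduct.map Δ αM ∘ₗ ρ
      = TensorProduct.map α ρ ∘ₗ ρ) ∧
  (TensorProduct.map α αM ∘ₗ ρ = ρ ∘ₗ αM)

/-- The map `B_{V,W} : V ⊗ W → W ⊗ V`, `B_{V,W}(v ⊗ w) = Σ R(w_A ⊗ v_A) w_W ⊗ v_V`,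
induced by comodule structure maps `ρ_V`, `ρ_W` and a bilinear form `R`. -/
noncomputable def Bmap (k : Type*) {A V W : Type*} [CommRing k] [AddCommGroup A] [Module k A]
    [AddCommGroup V] [Module k V] [AddCommGroup W] [Module k W]
    (R : A →ₗ[k] A →ₗ[k] k) (ρV : V →ₗ[k] A ⊗[k] V) (ρW : W →ₗ[k] A ⊗[k] W) :
    V ⊗[k] W →ₗ[k] W ⊗[k] V :=
  (TensorProduct.lid k (W ⊗[k] V)).toLinearMap
    ∘ₗ TensorProduct.map (TensorProduct.lift R) LinearMap.id
    ∘ₗ (TensorProduct.tensorTensorTensorComm k A W A V).toLinearMap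
    ∘ₗ TensorProduct.map ρW ρV
    ∘ₗ (TensorProduct.comm k V W).toLinearMap

/-- `B` is a solution of the Hom-Yang-Baxter equation for `(V, αV)`. -/
def IsHYBESolution (k : Type*) {V : Type*} [CommRing k] [AddCommGroup V] [Module k V]
    (αV : V →ₗ[k] V) (B : V ⊗[k] V →ₗ[k] V ⊗[k] V) : Prop :=
  (B ∘ₗ TensorProduct.map αV αV = TensorProduct.map αV αV ∘ₗ B) ∧
  ((TensorProduct.assoc k V V V).symm.toLinearMap
      ∘ₗ TensorProduct.map αV B
      ∘ₗ (TensorProduct.assoc k V V V).toLinearMap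
      ∘ₗ TensorProduct.map B αV
      ∘ₗ (TensorProduct.assoc k V V V).symm.toLinearMap
      ∘ₗ TensorProduct.map αV B
      ∘ₗ (TensorProduct.assoc k V V V).toLinearMap
    = TensorProduct.map B αV
      ∘ₗ (TensorProduct.assoc k V V V).symm.toLinearMap
      ∘ₗ TensorProduct.map αV B
      ∘ₗ (TensorProduct.assoc k V V V).toLinearMap
      ∘ₗ TensorProduct.map B αV)

/-- A (classical, possibly non-unital non-counital) bialgebra. -/
def IsBialgebraNC (k : Type*) {H : Type*} [CommRing k] [AddCommGroup H] [Module k H]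
    (μ : H →ₗ[k] H →ₗ[k] H) (Δ : H →ₗ[k] H ⊗[k] H) : Prop :=
  (∀ x y z : H, μ (μ x y) z = μ x (μ y z)) ∧
  (TensorProduct.map LinearMap.id Δ ∘ₗ Δ =
    (TensorProduct.assoc k H H H).toLinearMap ∘ₗ TensorProduct.map Δ LinearMap.id ∘ₗ Δ) ∧
  (∀ (x y : H) (m n : ℕ) (x1 x2 : Fin m → H) (y1 y2 : Fin n → H),
    Δ x = ∑ i, x1 i ⊗ₜ[k] x2 i → Δ y = ∑ j, y1 j ⊗ₜ[k] y2 j →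
    Δ (μ x y) = ∑ i, ∑ j, μ (x1 i) (y1 j) ⊗ₜ[k] μ (x2 i) (y2 j))

/-! Expanding the three braidings gives a sum in which each of `u`, `v`, `w` is hit by the
coaction twice: once directly, and once more on its comodule component. Using the
`α`-invariance of `R` to move a twisting map onto the outer `A`-component, the comodule axiom
`Σ α(m_A) ⊗ ρ(m_M) = Σ (m_A)₁ ⊗ (m_A)₂ ⊗ α_M(m_M)` turns each such iterated coaction into a
comultiplication, which produces `θ`. -/

namespace IsComodule

variable {k A X Y P : Type*} [CommRing k] [AddCommGroup A] [Module k A]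
  [AddCommGroup X] [Module k X] [AddCommGroup Y] [Module k Y] [AddCommGroup P] [Module k P]
  {Δ : A →ₗ[k] A ⊗[k] A} {α : A →ₗ[k] A}
  {αX : X →ₗ[k] X} {ρX : X →ₗ[k] A ⊗[k] X} {αY : Y →ₗ[k] Y} {ρY : Y →ₗ[k] A ⊗[k] Y}

theorem rho_apply_alpha (hX : IsComodule k Δ α αX ρX) (x : X) :
    ρX (αX x) = TensorProduct.map α αX (ρX x) :=
  (LinearMap.congr_fun hX.2 x).symm

theorem sum_smul_map_rho (hX : IsComodule k Δ α αX ρX) {x : X} {n d : ℕ}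
    {xA : Fin n → A} {xX : Fin n → X} (hx : ρX x = ∑ i, xA i ⊗ₜ[k] xX i)
    {x1 x2 : Fin n → Fin d → A} (hd : ∀ i, Δ (xA i) = ∑ p, x1 i p ⊗ₜ[k] x2 i p)
    (φ : A →ₗ[k] k) (F : A ⊗[k] X →ₗ[k] P) :
    ∑ i, φ (α (xA i)) • F (ρX (xX i)) = ∑ i, ∑ p, φ (x1 i p) • F (x2 i p ⊗ₜ[k] αX (xX i)) := by
  have hcoassoc := congrArg ((TensorProduct.lid k P).toLinearMap ∘ₗ TensorProduct.map φ F)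
    (LinearMap.congr_fun hX.1 x)
  simpa [hx, hd, TensorProduct.sum_tmul] using hcoassoc.symm

theorem sum_smul_apply_rho_rho (hX : IsComodule k Δ α αX ρX) (hY : IsComodule k Δ α αY ρY)
    {x : X} {y : Y} {m n d e : ℕ}
    {xA : Fin m → A} {xX : Fin m → X} (hx : ρX x = ∑ j, xA j ⊗ₜ[k] xX j)
    {yA : Fin n → A} {yY : Fin n → Y} (hy : ρY y = ∑ l, yA l ⊗ₜ[k] yY l)
    {x1 x2 : Fin m → Fin d → A} (hdx : ∀ j, Δ (xA j) = ∑ q, x1 j q ⊗ₜ[k] x2 j q)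
    {y1 y2 : Fin n → Fin e → A} (hdy : ∀ l, Δ (yA l) = ∑ r, y1 l r ⊗ₜ[k] y2 l r)
    (f g : A →ₗ[k] k) (β : A ⊗[k] X →ₗ[k] A ⊗[k] Y →ₗ[k] P) :
    ∑ j, ∑ l, (f (α (xA j)) * g (α (yA l))) • β (ρX (xX j)) (ρY (yY l))
      = ∑ j, ∑ l, ∑ q, ∑ r, (f (x1 j q) * g (y1 l r)) •
          β (x2 j q ⊗ₜ[k] αX (xX j)) (y2 l r ⊗ₜ[k] αY (yY l)) := by
  set βY : A ⊗[k] X →ₗ[k] P := ∑ l, g (α (yA l)) • β.flip (ρY (yY l))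
  calc _ = ∑ j, f (α (xA j)) • βY (ρX (xX j)) := by
        simp [βY, Finset.smul_sum, smul_smul]
    _ = ∑ j, ∑ q, f (x1 j q) • βY (x2 j q ⊗ₜ[k] αX (xX j)) :=
        hX.sum_smul_map_rho hx hdx f βY
    _ = ∑ j, ∑ q, f (x1 j q) • ∑ l, ∑ r, g (y1 l r) •
          β (x2 j q ⊗ₜ[k] αX (xX j)) (y2 l r ⊗ₜ[k] αY (yY l)) := by
        simp only [βY, LinearMap.coe_sum, Finset.sum_apply, LinearMap.smul_apply,
          LinearMap.flip_apply]
        simp only [hY.sum_smul_map_rho hy hdy g]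
    _ = _ := by
        simp only [Finset.smul_sum, smul_smul]
        exact Finset.sum_congr rfl fun j _ => Finset.sum_comm

end IsComodule

section Braiding

variable {k A U V W P : Type*} [CommRing k] [AddCommGroup A] [Module k A]
  [AddCommGroup U] [Module k U] [AddCommGroup V] [Module k V] [AddCommGroup W] [Module k W]
  [AddCommGroup P] [Module k P]

noncomputable def braidPairing (R : A →ₗ[k] A →ₗ[k] k) :
    A ⊗[k] V →ₗ[k] A ⊗[k] W →ₗ[k] W ⊗[k] V :=
  TensorProduct.curry <| (TensorProduct.lid k (W ⊗[k] V)).toLinearMap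
    ∘ₗ TensorProduct.map (TensorProduct.lift R) LinearMap.id
    ∘ₗ (TensorProduct.tensorTensorTensorComm k A W A V).toLinearMap
    ∘ₗ (TensorProduct.comm k (A ⊗[k] V) (A ⊗[k] W)).toLinearMap

variable {R : A →ₗ[k] A →ₗ[k] k} {Δ : A →ₗ[k] A ⊗[k] A} {α : A →ₗ[k] A}
  {αU : U →ₗ[k] U} {ρU : U →ₗ[k] A ⊗[k] U} {αV : V →ₗ[k] V} {ρV : V →ₗ[k] A ⊗[k] V}
  {αW : W →ₗ[k] W} {ρW : W →ₗ[k] A ⊗[k] W}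

@[simp]
theorem braidPairing_tmul_tmul (a : A) (v : V) (b : A) (w : W) :
    braidPairing R (a ⊗ₜ[k] v) (b ⊗ₜ[k] w) = R b a • (w ⊗ₜ[k] v) := by
  simp [braidPairing, TensorProduct.tensorTensorTensorComm_tmul]

theorem Bmap_tmul (v : V) (w : W) :
    Bmap k R ρV ρW (v ⊗ₜ[k] w) = braidPairing R (ρV v) (ρW w) := by
  simp [Bmap, braidPairing]

theorem braidPairing_map_map (hinv : ∀ x y : A, R (α x) (α y) = R x y)
    (s : A ⊗[k] V) (t : A ⊗[k] W) :
    braidPairing R (TensorProduct.map α αV s) (TensorProduct.map α αW t)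
      = TensorProduct.map αW αV (braidPairing R s t) := by
  induction s using TensorProduct.induction_on with
  | zero => simp
  | add s s' hs hs' => simp only [map_add, LinearMap.add_apply, hs, hs']
  | tmul a v =>
    induction t using TensorProduct.induction_on with
    | zero => simp
    | add t t' ht ht' => simp only [map_add, ht, ht']
    | tmul b w => simp [hinv]

theorem Bmap_tmul_alpha (hinv : ∀ x y : A, R (α x) (α y) = R x y)
    (hV : IsComodule k Δ α αV ρV) (hW : IsComodule k Δ α αW ρW) (v : V) (w : W) :
    Bmap k R ρV ρW (αV v ⊗ₜ[k] αW w) = TensorProduct.map αW αV (Bmap k R ρV ρW (v ⊗ₜ[k] w)) := by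
  rw [Bmap_tmul, Bmap_tmul, hV.rho_apply_alpha, hW.rho_apply_alpha, braidPairing_map_map hinv]

theorem map_Bmap_assoc_map_Bmap_tmul (hinv : ∀ x y : A, R (α x) (α y) = R x y)
    (hU : IsComodule k Δ α αU ρU) (hW : IsComodule k Δ α αW ρW)
    {u : U} {v : V} {w : W} {nu nv nw du : ℕ}
    {uA : Fin nu → A} {uU : Fin nu → U} (hu : ρU u = ∑ i, uA i ⊗ₜ[k] uU i)
    {vA : Fin nv → A} {vV : Fin nv → V} (hv : ρV v = ∑ j, vA j ⊗ₜ[k] vV j)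
    {wA : Fin nw → A} {wW : Fin nw → W} (hw : ρW w = ∑ l, wA l ⊗ₜ[k] wW l)
    {uA1 uA2 : Fin nu → Fin du → A} (hdu : ∀ i, Δ (uA i) = ∑ p, uA1 i p ⊗ₜ[k] uA2 i p) :
    (TensorProduct.map αV (Bmap k R ρU ρW) ∘ₗ (TensorProduct.assoc k V U W).toLinearMap
        ∘ₗ TensorProduct.map (Bmap k R ρU ρV) αW) ((u ⊗ₜ[k] v) ⊗ₜ[k] w)
      = ∑ i, ∑ p, ∑ j, ∑ l, (R (α (vA j)) (uA1 i p) * R (α (wA l)) (uA2 i p)) •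
          (αV (vV j) ⊗ₜ[k] (αW (wW l) ⊗ₜ[k] αU (uU i))) := by
  set F : V → A ⊗[k] U →ₗ[k] V ⊗[k] (W ⊗[k] U) := fun y =>
    TensorProduct.mk k V (W ⊗[k] U) (αV y) ∘ₗ (braidPairing R).flip (ρW (αW w))
  calc _ = ∑ j, ∑ i, R (α (vA j)) (α (uA i)) • F (vV j) (ρU (uU i)) := by
        simp [F, Bmap_tmul, hu, hv, hinv, TensorProduct.sum_tmul, ← TensorProduct.smul_tmul']
    _ = ∑ j, ∑ i, ∑ p, R (α (vA j)) (uA1 i p) • F (vV j) (uA2 i p ⊗ₜ[k] αU (uU i)) :=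
        Finset.sum_congr rfl fun j _ => hU.sum_smul_map_rho hu hdu (R (α (vA j))) (F (vV j))
    _ = _ := by
        simp only [hW.rho_apply_alpha, hw, map_sum, map_tmul, LinearMap.coe_comp, LinearMap.coe_sum,
          Function.comp_apply, Finset.sum_apply, LinearMap.flip_apply, braidPairing_tmul_tmul,
          map_smul, mk_apply, Finset.smul_sum, smul_smul, F]
        rw [Finset.sum_comm]
        exact Finset.sum_congr rfl fun i _ => Finset.sum_comm

theorem sum_smul_Bmap_tmul (hV : IsComodule k Δ α αV ρV) (hW : IsComodule k Δ α αW ρW)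
    {v : V} {w : W} {nv nw dv dw : ℕ}
    {vA : Fin nv → A} {vV : Fin nv → V} (hv : ρV v = ∑ j, vA j ⊗ₜ[k] vV j)
    {wA : Fin nw → A} {wW : Fin nw → W} (hw : ρW w = ∑ l, wA l ⊗ₜ[k] wW l)
    {vA1 vA2 : Fin nv → Fin dv → A} (hdv : ∀ j, Δ (vA j) = ∑ q, vA1 j q ⊗ₜ[k] vA2 j q)
    {wA1 wA2 : Fin nw → Fin dw → A} (hdw : ∀ l, Δ (wA l) = ∑ r, wA1 l r ⊗ₜ[k] wA2 l r)
    (f g : A →ₗ[k] k) (Φ : W ⊗[k] V →ₗ[k] P) :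
    ∑ j, ∑ l, (f (α (vA j)) * g (α (wA l))) • Φ (Bmap k R ρV ρW (vV j ⊗ₜ[k] wW l))
      = ∑ j, ∑ l, ∑ q, ∑ r, (f (vA1 j q) * g (wA1 l r) * R (wA2 l r) (vA2 j q)) •
          Φ (αW (wW l) ⊗ₜ[k] αV (vV j)) := by
  simpa [Bmap_tmul, smul_smul] using
    hV.sum_smul_apply_rho_rho hW hv hw hdv hdw f g ((braidPairing R).compr₂ Φ)

end Braiding

theorem rhs_composite_eq_theta_general
    (k : Type*) {A U V W : Type*} [CommRing k] [AddCommGroup A] [Module k A]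
    [AddCommGroup U] [Module k U] [AddCommGroup V] [Module k V]
    [AddCommGroup W] [Module k W]
    (Δ : A →ₗ[k] A ⊗[k] A) (α : A →ₗ[k] A)
    (R : A →ₗ[k] A →ₗ[k] k)
    (hinv : ∀ x y : A, R (α x) (α y) = R x y)
    (αU : U →ₗ[k] U) (ρU : U →ₗ[k] A ⊗[k] U) (hU : IsComodule k Δ α αU ρU)
    (αV : V →ₗ[k] V) (ρV : V →ₗ[k] A ⊗[k] V) (hV : IsComodule k Δ α αV ρV)
    (αW : W →ₗ[k] W) (ρW : W →ₗ[k] A ⊗[k] W) (hW : IsComodule k Δ α αW ρW)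
    (u : U) (v : V) (w : W)
    (nu nv nw : ℕ)
    (uA : Fin nu → A) (uU : Fin nu → U) (hu : ρU u = ∑ i, uA i ⊗ₜ[k] uU i)
    (vA : Fin nv → A) (vV : Fin nv → V) (hv : ρV v = ∑ j, vA j ⊗ₜ[k] vV j)
    (wA : Fin nw → A) (wW : Fin nw → W) (hw : ρW w = ∑ l, wA l ⊗ₜ[k] wW l)
    (du dv dw : ℕ)
    (uA1 uA2 : Fin nu → Fin du → A)
    (hdu : ∀ i, Δ (uA i) = ∑ p, uA1 i p ⊗ₜ[k] uA2 i p)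
    (vA1 vA2 : Fin nv → Fin dv → A)
    (hdv : ∀ j, Δ (vA j) = ∑ q, vA1 j q ⊗ₜ[k] vA2 j q)
    (wA1 wA2 : Fin nw → Fin dw → A)
    (hdw : ∀ l, Δ (wA l) = ∑ r, wA1 l r ⊗ₜ[k] wA2 l r) :
    (TensorProduct.map (Bmap k R ρV ρW) αU
        ∘ₗ (TensorProduct.assoc k V W U).symm.toLinearMap
        ∘ₗ TensorProduct.map αV (Bmap k R ρU ρW)
        ∘ₗ (TensorProduct.assoc k V U W).toLinearMap
        ∘ₗ TensorProduct.map (Bmap k R ρU ρV) αW)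
      ((u ⊗ₜ[k] v) ⊗ₜ[k] w)
      = ∑ i, ∑ j, ∑ l, ∑ p, ∑ q, ∑ r,
          (R (vA1 j q) (uA1 i p) * R (wA1 l r) (uA2 i p) * R (wA2 l r) (vA2 j q)) •
            ((αW (αW (wW l)) ⊗ₜ[k] αV (αV (vV j))) ⊗ₜ[k] αU (αU (uU i))) := by
  rw [LinearMap.comp_apply, LinearMap.comp_apply,
    map_Bmap_assoc_map_Bmap_tmul hinv hU hW hu hv hw hdu]
  calc _ = ∑ i, ∑ p, ∑ j, ∑ l, (R (α (vA j)) (uA1 i p) * R (α (wA l)) (uA2 i p)) •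
          (TensorProduct.map αW αV (Bmap k R ρV ρW (vV j ⊗ₜ[k] wW l)) ⊗ₜ[k] αU (αU (uU i))) := by
        simp [Bmap_tmul_alpha hinv hV hW]
    _ = ∑ i, ∑ p, ∑ j, ∑ l, ∑ q, ∑ r,
          (R (vA1 j q) (uA1 i p) * R (wA1 l r) (uA2 i p) * R (wA2 l r) (vA2 j q)) •
            ((αW (αW (wW l)) ⊗ₜ[k] αV (αV (vV j))) ⊗ₜ[k] αU (αU (uU i))) :=
        Finset.sum_congr rfl fun i _ => Finset.sum_congr rfl fun p _ =>
          sum_smul_Bmap_tmul hV hW hv hw hdv hdw (R.flip (uA1 i p)) (R.flip (uA2 i p))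
            ((TensorProduct.mk k (W ⊗[k] V) U).flip (αU (αU (uU i))) ∘ₗ TensorProduct.map αW αV)
    _ = _ := Finset.sum_congr rfl fun i _ => by
        rw [Finset.sum_comm]
        exact Finset.sum_congr rfl fun j _ => Finset.sum_comm

/-- Lemma 7.10: the right-hand composite of the mixed HYBE
applied to `u ⊗ v ⊗ w` equals `θ`. -/
theorem rhs_composite_eq_theta
    (k : Type*) {A U V W : Type*} [CommRing k] [AddCommGroup A] [Module k A]
    [AddCommGroup U] [Module k U] [AddCommGroup V] [Module k V]
    [AddCommGroup W] [Module k W]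
    (μ : A →ₗ[k] A →ₗ[k] A) (Δ : A →ₗ[k] A ⊗[k] A) (α : A →ₗ[k] A)
    (R : A →ₗ[k] A →ₗ[k] k)
    (h : IsCobraidedHomBialgebra k μ Δ α R)
    (hinv : ∀ x y : A, R (α x) (α y) = R x y)
    (αU : U →ₗ[k] U) (ρU : U →ₗ[k] A ⊗[k] U) (hU : IsComodule k Δ α αU ρU)
    (αV : V →ₗ[k] V) (ρV : V →ₗ[k] A ⊗[k] V) (hV : IsComodule k Δ α αV ρV)
    (αW : W →ₗ[k] W) (ρW : W →ₗ[k] A ⊗[k] W) (hW : IsComodule k Δ α αW ρW)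
    (u : U) (v : V) (w : W)
    (nu nv nw : ℕ)
    (uA : Fin nu → A) (uU : Fin nu → U) (hu : ρU u = ∑ i, uA i ⊗ₜ[k] uU i)
    (vA : Fin nv → A) (vV : Fin nv → V) (hv : ρV v = ∑ j, vA j ⊗ₜ[k] vV j)
    (wA : Fin nw → A) (wW : Fin nw → W) (hw : ρW w = ∑ l, wA l ⊗ₜ[k] wW l)
    (du dv dw : ℕ)
    (uA1 uA2 : Fin nu → Fin du → A)
    (hdu : ∀ i, Δ (uA i) = ∑ p, uA1 i p ⊗ₜ[k] uA2 i p)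
    (vA1 vA2 : Fin nv → Fin dv → A)
    (hdv : ∀ j, Δ (vA j) = ∑ q, vA1 j q ⊗ₜ[k] vA2 j q)
    (wA1 wA2 : Fin nw → Fin dw → A)
    (hdw : ∀ l, Δ (wA l) = ∑ r, wA1 l r ⊗ₜ[k] wA2 l r) :
    (TensorProduct.map (Bmap k R ρV ρW) αU
        ∘ₗ (TensorProduct.assoc k V W U).symm.toLinearMap
        ∘ₗ TensorProduct.map αV (Bmap k R ρU ρW)
        ∘ₗ (TensorProduct.assoc k V U W).toLinearMap
        ∘ₗ TensorProduct.map (Bmap k R ρU ρV) αW)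
      ((u ⊗ₜ[k] v) ⊗ₜ[k] w)
      = ∑ i, ∑ j, ∑ l, ∑ p, ∑ q, ∑ r,
          (R (vA1 j q) (uA1 i p) * R (wA1 l r) (uA2 i p) * R (wA2 l r) (vA2 j q)) •
            ((αW (αW (wW l)) ⊗ₜ[k] αV (αV (vV j))) ⊗ₜ[k] αU (αU (uU i))) :=
  rhs_composite_eq_theta_general k Δ α R hinv αU ρU hU αV ρV hV αW ρW hW u v w nu nv nw uA uU hu vA
    vV hv wA wW hw du dv dw uA1 uA2 hdu vA1 vA2 hdv wA1 wA2 hdw
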